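/- arXiv:2402.07703 — 5 statements merged into one kernel-verified Lean document; each statement's English description precedes it below -/
import Mathlib

section
/- Let T ≥ 1 and let d_t ≥ 1 be integer delays with t + d_t − 1 ≤ T for each t ∈ {1,…,T}; set F_t := {k ∈ {1,…,T} : k + d_k − 1 = t} and F_{t,k} := {s ∈ F_t : s < k}. Then Σ_{t=1}^T Σ_{k∈F_t} ( Σ_{τ=k}^{t−1} |F_τ| + |F_{t,k}| ) ≤ 2 Σ_{t=1}^T d_t. -/
/-!
Grouping the outer sum by the round `k` rather than by the arrival time `t = k + d_k - 1` of
its feedback, the left side counts the pairs `(k, s)` such that the feedback of `s` arrives in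
`[k, k + d_k - 1]` and comes strictly before that of `k` in the order (arrival time, round).
A pair with `k < s` has `s ∈ (k, k + d_k]`, so it is charged to `k` at most `d_k` times;
a pair with `s ≤ k` has `k ∈ [s, s + d_s)`, so it is charged to `s` at most `d_s` times.
-/

open Finset

theorem Finset.sum_card_filter_eq_sum_card_filter_lt_add_sum_card_filter_le {α : Type*}
    [LinearOrder α] (s : Finset α) (R : α → α → Prop) [DecidableRel R] :
    ∑ a ∈ s, #{b ∈ s | R a b} =
      ∑ a ∈ s, #{b ∈ s | R a b ∧ a < b} + ∑ b ∈ s, #{a ∈ s | R a b ∧ b ≤ a} := by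
  have split (a : α) :
      #{b ∈ s | R a b} = #{b ∈ s | R a b ∧ a < b} + #{b ∈ s | R a b ∧ b ≤ a} := by
    rw [← card_filter_add_card_filter_not (s := {b ∈ s | R a b}) (a < ·), filter_filter,
      filter_filter]
    simp only [not_lt]
  rw [sum_congr rfl fun a _ => split a, sum_add_distrib, add_right_inj]
  simp only [card_filter]
  exact sum_comm

namespace DelayedFeedback

def arrival (d : ℕ → ℕ) (k : ℕ) : ℕ := k + d k - 1

def ArrivesWhilePending (d : ℕ → ℕ) (k s : ℕ) : Prop :=
  k ≤ arrival d s ∧ (arrival d s < arrival d k ∨ arrival d s = arrival d k ∧ s < k)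

instance (d : ℕ → ℕ) : DecidableRel (ArrivesWhilePending d) := fun k s => by
  unfold ArrivesWhilePending; infer_instance

theorem arrivesWhilePending_irrefl (d : ℕ → ℕ) (k : ℕ) : ¬ ArrivesWhilePending d k k := by
  simp [ArrivesWhilePending]

theorem card_filter_arrivesWhilePending_lt_le (I : Finset ℕ) (d : ℕ → ℕ) (k : ℕ) :
    #{s ∈ I | ArrivesWhilePending d k s ∧ k < s} ≤ d k := by
  calc #{s ∈ I | ArrivesWhilePending d k s ∧ k < s} ≤ #(Ioc k (k + d k)) := by
        refine card_le_card fun s hs => ?_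
        obtain ⟨-, hks, hlt⟩ := mem_filter.mp hs
        unfold ArrivesWhilePending arrival at hks
        rw [mem_Ioc]
        omega
    _ = d k := by simp

theorem card_filter_arrivesWhilePending_ge_le (I : Finset ℕ) (d : ℕ → ℕ) (s : ℕ) :
    #{k ∈ I | ArrivesWhilePending d k s ∧ s ≤ k} ≤ d s := by
  calc #{k ∈ I | ArrivesWhilePending d k s ∧ s ≤ k} ≤ #(Ico s (s + d s)) := by
        refine card_le_card fun k hk => ?_
        obtain ⟨-, hks, hsk⟩ := mem_filter.mp hk
        -- `omega` treats `d k` and `d s` as unrelated atoms, so the case `k = s` is split off.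
        obtain rfl | hsk := hsk.eq_or_lt
        · exact absurd hks (arrivesWhilePending_irrefl d s)
        unfold ArrivesWhilePending arrival at hks
        rw [mem_Ico]
        omega
    _ = d s := by simp

theorem card_filter_arrival_mem_Icc_add_card_filter_eq (I : Finset ℕ) {d : ℕ → ℕ} {k : ℕ}
    (hk : 1 ≤ k) (hdk : 1 ≤ d k) :
    #{s ∈ I | arrival d s ∈ Icc k (arrival d k - 1)}
        + #{s ∈ I | arrival d s = arrival d k ∧ s < k}
      = #{s ∈ I | ArrivesWhilePending d k s} := by
  rw [← card_union_of_disjoint, ← filter_or]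
  · refine congrArg card <| filter_congr fun s _ => ?_
    simp only [mem_Icc, ArrivesWhilePending, arrival]
    omega
  · refine disjoint_filter.mpr fun s _ h => ?_
    simp only [mem_Icc] at h
    omega

theorem sum_sum_card_eq_sum_card_filter_arrivesWhilePending (I J : Finset ℕ) (d : ℕ → ℕ)
    (hI : ∀ k ∈ I, 1 ≤ k ∧ 1 ≤ d k) (hIJ : ∀ k ∈ I, arrival d k ∈ J) :
    ∑ t ∈ J, ∑ k ∈ {k ∈ I | arrival d k = t},
        (∑ τ ∈ Icc k (t - 1), #{s ∈ I | arrival d s = τ}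
          + #{s ∈ {s ∈ I | arrival d s = t} | s < k})
      = ∑ k ∈ I, #{s ∈ I | ArrivesWhilePending d k s} := by
  calc _ = ∑ t ∈ J, ∑ k ∈ {k ∈ I | arrival d k = t},
        (∑ τ ∈ Icc k (arrival d k - 1), #{s ∈ I | arrival d s = τ}
          + #{s ∈ {s ∈ I | arrival d s = arrival d k} | s < k}) := by
        refine sum_congr rfl fun t _ => sum_congr rfl fun k hk => ?_
        rw [(mem_filter.mp hk).2]
    _ = ∑ k ∈ I, #{s ∈ I | ArrivesWhilePending d k s} := by
        rw [sum_fiberwise_of_maps_to hIJ]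
        refine sum_congr rfl fun k hk => ?_
        rw [sum_card_fiberwise_eq_card_filter, filter_filter]
        exact card_filter_arrival_mem_Icc_add_card_filter_eq I (hI k hk).1 (hI k hk).2

end DelayedFeedback

open DelayedFeedback

theorem delayed_feedback_sum_bound_general
    (T : ℕ) (d : ℕ → ℕ)
    (hd : ∀ t ∈ Finset.Icc 1 T, 1 ≤ d t ∧ t + d t - 1 ≤ T)
    (F : ℕ → Finset ℕ)
    (hF : ∀ t, F t = (Finset.Icc 1 T).filter (fun k => k + d k - 1 = t))
    (Ftk : ℕ → ℕ → Finset ℕ)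
    (hFtk : ∀ t k, Ftk t k = (F t).filter (fun s => s < k)) :
    ∑ t ∈ Finset.Icc 1 T, ∑ k ∈ F t,
        ((∑ τ ∈ Finset.Icc k (t - 1), (F τ).card) + (Ftk t k).card)
      ≤ 2 * ∑ t ∈ Finset.Icc 1 T, d t := by
  obtain rfl : Ftk = fun t k => {s ∈ F t | s < k} := funext₂ hFtk
  obtain rfl : F = fun t => {k ∈ Icc 1 T | arrival d k = t} := funext hF
  have hI : ∀ k ∈ Icc 1 T, 1 ≤ k ∧ 1 ≤ d k := fun k hk =>
    ⟨(mem_Icc.mp hk).1, (hd k hk).1⟩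
  have hIJ : ∀ k ∈ Icc 1 T, arrival d k ∈ Icc 1 T := fun k hk => by
    have := hd k hk
    rw [mem_Icc] at hk ⊢
    unfold arrival
    omega
  rw [sum_sum_card_eq_sum_card_filter_arrivesWhilePending _ _ d hI hIJ,
    sum_card_filter_eq_sum_card_filter_lt_add_sum_card_filter_le, two_mul]
  exact add_le_add (sum_le_sum fun k _ => card_filter_arrivesWhilePending_lt_le _ d k)
    (sum_le_sum fun s _ => card_filter_arrivesWhilePending_ge_le _ d s)

/-- Lemma on cumulative delays (Lemma 3 / Quanrud--Khashabi):
`Σ_{t=1}^T Σ_{k∈F_t} ( Σ_{τ=k}^{t−1} |F_τ| + |F_{t,k}| ) ≤ 2 Σ_{t=1}^T d_t`. -/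
theorem delayed_feedback_sum_bound
    (T : ℕ) (hT : 1 ≤ T) (d : ℕ → ℕ)
    (hd : ∀ t ∈ Finset.Icc 1 T, 1 ≤ d t ∧ t + d t - 1 ≤ T)
    (F : ℕ → Finset ℕ)
    (hF : ∀ t, F t = (Finset.Icc 1 T).filter (fun k => k + d k - 1 = t))
    (Ftk : ℕ → ℕ → Finset ℕ)
    (hFtk : ∀ t k, Ftk t k = (F t).filter (fun s => s < k)) :
    ∑ t ∈ Finset.Icc 1 T, ∑ k ∈ F t,
        ((∑ τ ∈ Finset.Icc k (t - 1), (F τ).card) + (Ftk t k).card)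
      ≤ 2 * ∑ t ∈ Finset.Icc 1 T, d t :=
  delayed_feedback_sum_bound_general T d hd F hF Ftk hFtk
end

section
/- Let E be a real normed vector space, X ⊆ E a convex set, μ > 0, and Φ : E → ℝ differentiable with Φ(z) − Φ(y) − ∇Φ(y)(z − y) ≥ (μ/2)‖z − y‖² for all y, z ∈ X. Let y ∈ X be a minimizer of Φ over X and let f : E → ℝ be differentiable, convex on X, with ‖∇f(y)‖⋆ ≤ G. Then for every z ∈ X, Φ(y) + f(y) − Φ(z) − f(z) ≤ G²/(2μ). -/
/-!
Since `y` minimizes `Φ` over the convex set `X`, first-order optimality gives `∇Φ(y)(z - y) ≥ 0`,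
so strong convexity yields `Φ(y) - Φ(z) ≤ -(μ/2)‖z - y‖²`. Convexity of `f` gives
`f(y) - f(z) ≤ -∇f(y)(z - y) ≤ G‖z - y‖`. Hence the left-hand side is at most
`G t - (μ/2) t²` with `t = ‖z - y‖`, which is bounded by `G²/(2μ)`.
-/

section

variable {E : Type*} [NormedAddCommGroup E] [NormedSpace ℝ E] {s : Set E} {f : E → ℝ}
  {f' : E →L[ℝ] ℝ} {x y : E}

/-- Restricting `f` to the line through `x` and `y` reduces this to the one-dimensional
`ConvexOn.le_slope_of_hasDerivAt`. -/
theorem ConvexOn.hasFDerivAt_apply_sub_le (hf : ConvexOn ℝ s f) (hx : x ∈ s) (hy : y ∈ s)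
    (hf' : HasFDerivAt f f' x) : f' (y - x) ≤ f y - f x := by
  have hline : ConvexOn ℝ (AffineMap.lineMap (k := ℝ) x y ⁻¹' s)
      (f ∘ AffineMap.lineMap (k := ℝ) x y) :=
    hf.comp_affineMap _
  have hderiv : HasDerivAt (f ∘ AffineMap.lineMap (k := ℝ) x y) (f' (y - x)) 0 := by
    refine HasFDerivAt.comp_hasDerivAt (0 : ℝ) ?_ AffineMap.hasDerivAt_lineMap
    simpa using hf'
  simpa [slope_def_field] using
    hline.le_slope_of_hasDerivAt (by simpa using hx) (by simpa using hy) zero_lt_one hderiv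

theorem IsMinOn.hasFDerivAt_apply_sub_nonneg (hs : Convex ℝ s) (h : IsMinOn f s x)
    (hf' : HasFDerivAt f f' x) (hx : x ∈ s) (hy : y ∈ s) : 0 ≤ f' (y - x) :=
  h.localize.hasFDerivWithinAt_nonneg hf'.hasFDerivWithinAt
    (sub_mem_posTangentConeAt_of_segment_subset (hs.segment_subset hx hy))

end

/-- If `Φ` is `μ`-strongly convex on `X`, `y` minimizes `Φ` over `X`, and `f` is convex on `X`
with `‖∇f(y)‖⋆ ≤ G`, then `Φ(y) + f(y) − Φ(z) − f(z) ≤ G²/(2μ)` for every `z ∈ X`. -/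
theorem strongly_convex_min_perturbation_bound
    {E : Type*} [NormedAddCommGroup E] [NormedSpace ℝ E]
    (X : Set E) (hX : Convex ℝ X) (μ : ℝ) (hμ : 0 < μ)
    (Φ : E → ℝ) (hΦ : Differentiable ℝ Φ)
    (hsc : ∀ y ∈ X, ∀ z ∈ X,
      Φ z - Φ y - fderiv ℝ Φ y (z - y) ≥ μ / 2 * ‖z - y‖ ^ 2)
    (y : E) (hy : y ∈ X) (hmin : IsMinOn Φ X y)
    (f : E → ℝ) (hf : Differentiable ℝ f) (hfconv : ConvexOn ℝ X f)
    (G : ℝ) (hG : ‖fderiv ℝ f y‖ ≤ G) :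
    ∀ z ∈ X, Φ y + f y - Φ z - f z ≤ G ^ 2 / (2 * μ) := by
  intro z hz
  have hopt : 0 ≤ fderiv ℝ Φ y (z - y) :=
    hmin.hasFDerivAt_apply_sub_nonneg hX (hΦ y).hasFDerivAt hy hz
  have hgrad : fderiv ℝ f y (z - y) ≤ f z - f y :=
    hfconv.hasFDerivAt_apply_sub_le hy hz (hf y).hasFDerivAt
  have hdual : |fderiv ℝ f y (z - y)| ≤ G * ‖z - y‖ :=
    ((fderiv ℝ f y).le_opNorm _).trans (mul_le_mul_of_nonneg_right hG (norm_nonneg _))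
  have hyoung : 2 * ‖z - y‖ * G ≤ μ * ‖z - y‖ ^ 2 + μ⁻¹ * G ^ 2 := two_mul_le_add_mul_sq hμ
  have hbound : G ^ 2 / (2 * μ) = μ⁻¹ * G ^ 2 / 2 := by ring
  linarith [hsc y hy z hz, (abs_le.1 hdual).1]
end

section
/- Let E be a real normed vector space, X ⊆ E a convex set, and ψ : E → ℝ differentiable with B_ψ(a;b) ≥ (σ/2)‖a − b‖² for all a, b ∈ X (σ > 0) and ‖∇ψ(a) − ∇ψ(b)‖⋆ ≤ G_ψ‖a − b‖ for all a, b ∈ X. Let g be a continuous linear functional on E, η > 0, x₀ ∈ X, and let y⁺ ∈ X minimize the map x ↦ g(x) + B_ψ(x; x₀)/η over X. Then for every y ∈ X, ‖y − y⁺‖ ≤ (η‖g‖⋆ + G_ψ‖y − x₀‖)/σ. -/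
/-!
A Bregman divergence bounded below by `σ/2‖a - b‖²` makes `ψ` `σ`-strongly convex, and so is
`ψ + ℓ` for every linear `ℓ`. Multiplying the objective by `η` shows that `y⁺` minimizes
`ψ + ℓ` with `ℓ = η g - ∇ψ(x₀)`, so strong convexity gives the quadratic growth
`σ/2‖y - y⁺‖² ≤ (ψ + ℓ)(y) - (ψ + ℓ)(y⁺)`. Adding the Bregman bound at the pair `(y⁺, y)` cancels
`ψ` and leaves `σ‖y - y⁺‖² ≤ (ℓ + ∇ψ(y))(y - y⁺)`, hence `σ‖y - y⁺‖ ≤ ‖η g + ∇ψ(y) - ∇ψ(x₀)‖`,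
and the Lipschitz bound on `∇ψ` finishes.
-/

open Filter Topology

section

variable {E : Type*} [NormedAddCommGroup E] [NormedSpace ℝ E] {X : Set E} {σ : ℝ}

theorem strongConvexOn_of_bregman_ge {ψ : E → ℝ} (ψ' : E → E →L[ℝ] ℝ) (hX : Convex ℝ X)
    (hψ : ∀ a ∈ X, ∀ b ∈ X, σ / 2 * ‖a - b‖ ^ 2 ≤ ψ a - ψ b - ψ' b (a - b)) :
    StrongConvexOn X σ ψ := by
  refine ⟨hX, fun x hx y hy a b ha hb hab => ?_⟩
  obtain rfl : b = 1 - a := by linarith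
  set z := a • x + (1 - a) • y
  have hz : z ∈ X := hX hx hy ha hb hab
  have hxz : x - z = (1 - a) • (x - y) := by module
  have hyz : y - z = (-a) • (x - y) := by module
  have hx' := hψ x hx z hz
  have hy' := hψ y hy z hz
  rw [hxz, norm_smul, map_smul, Real.norm_of_nonneg hb, smul_eq_mul] at hx'
  rw [hyz, norm_smul, map_smul, norm_neg, Real.norm_of_nonneg ha, smul_eq_mul] at hy'
  simp only [smul_eq_mul]
  nlinarith [mul_le_mul_of_nonneg_left hx' ha, mul_le_mul_of_nonneg_left hy' hb]

theorem StrongConvexOn.sq_norm_sub_le_of_isMinOn {f : E → ℝ} {x y : E}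
    (hf : StrongConvexOn X σ f) (hmin : IsMinOn f X x) (hx : x ∈ X) (hy : y ∈ X) :
    σ / 2 * ‖y - x‖ ^ 2 ≤ f y - f x := by
  -- compare `f x` with `f (t • y + (1 - t) • x)`, divide by `t` and let `t → 0⁺`
  have hsegment : ∀ t ∈ Set.Ioo (0 : ℝ) 1, (1 - t) * (σ / 2 * ‖y - x‖ ^ 2) ≤ f y - f x := by
    rintro t ⟨ht0, ht1⟩
    have hconv := hf.2 hy hx ht0.le (sub_nonneg.2 ht1.le) (add_sub_cancel t 1)
    have hle := hmin (hf.1 hy hx ht0.le (sub_nonneg.2 ht1.le) (add_sub_cancel t 1))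
    simp only [smul_eq_mul, Set.mem_ofPred_eq] at hconv hle
    have : t * ((1 - t) * (σ / 2 * ‖y - x‖ ^ 2)) ≤ t * (f y - f x) := by nlinarith
    exact le_of_mul_le_mul_left this ht0
  have hlim : Tendsto (fun t : ℝ => (1 - t) * (σ / 2 * ‖y - x‖ ^ 2)) (𝓝[>] 0)
      (𝓝 (σ / 2 * ‖y - x‖ ^ 2)) := by
    have hcont : Continuous fun t : ℝ => (1 - t) * (σ / 2 * ‖y - x‖ ^ 2) := by fun_prop
    simpa using (hcont.tendsto 0).mono_left nhdsWithin_le_nhds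
  exact le_of_tendsto hlim <| eventually_of_mem (Ioo_mem_nhdsGT one_pos) hsegment

theorem mul_norm_sub_le_of_isMinOn_add {ψ : E → ℝ} (ψ' : E → E →L[ℝ] ℝ) (hX : Convex ℝ X)
    (hψ : ∀ a ∈ X, ∀ b ∈ X, σ / 2 * ‖a - b‖ ^ 2 ≤ ψ a - ψ b - ψ' b (a - b))
    (ℓ : E →L[ℝ] ℝ) {yplus y : E} (hyplus : yplus ∈ X) (hy : y ∈ X)
    (hmin : IsMinOn (fun z => ψ z + ℓ z) X yplus) :
    σ * ‖y - yplus‖ ≤ ‖ℓ + ψ' y‖ := by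
  have hconv : StrongConvexOn X σ (fun z => ψ z + ℓ z) :=
    strongConvexOn_of_bregman_ge (fun b => ψ' b + ℓ) hX fun a ha b hb => by
      have := hψ a ha b hb
      simp only [add_apply, map_sub] at this ⊢
      linarith
  have hgrowth := hconv.sq_norm_sub_le_of_isMinOn hmin hyplus hy
  have hbregman := hψ yplus hyplus y hy
  have hdual : (ℓ + ψ' y) (y - yplus) ≤ ‖ℓ + ψ' y‖ * ‖y - yplus‖ :=
    (le_abs_self _).trans ((ℓ + ψ' y).le_opNorm _)
  have hsq : σ * ‖y - yplus‖ ^ 2 ≤ ‖ℓ + ψ' y‖ * ‖y - yplus‖ := by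
    rw [← neg_sub y yplus, norm_neg] at hbregman
    simp only [add_apply, map_sub, map_neg] at hgrowth hbregman hdual
    linarith
  rcases (norm_nonneg (y - yplus)).eq_or_lt with h0 | hpos
  · simp [← h0]
  · rw [pow_two, ← mul_assoc] at hsq
    exact le_of_mul_le_mul_right hsq hpos

end

theorem mirror_step_stability_general
    {E : Type*} [NormedAddCommGroup E] [NormedSpace ℝ E]
    (X : Set E) (hX : Convex ℝ X)
    (ψ : E → ℝ)
    (σ : ℝ) (hσ : 0 < σ)
    (hsc : ∀ a ∈ X, ∀ b ∈ X,
      ψ a - ψ b - fderiv ℝ ψ b (a - b) ≥ σ / 2 * ‖a - b‖ ^ 2)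
    (Gψ : ℝ)
    (hlip : ∀ a ∈ X, ∀ b ∈ X, ‖fderiv ℝ ψ a - fderiv ℝ ψ b‖ ≤ Gψ * ‖a - b‖)
    (g : E →L[ℝ] ℝ) (η : ℝ) (hη : 0 < η) (x₀ : E) (hx₀ : x₀ ∈ X)
    (yplus : E) (hyp : yplus ∈ X)
    (hmin : IsMinOn
      (fun z => g z + (ψ z - ψ x₀ - fderiv ℝ ψ x₀ (z - x₀)) / η) X yplus) :
    ∀ y ∈ X, ‖y - yplus‖ ≤ (η * ‖g‖ + Gψ * ‖y - x₀‖) / σ := by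
  intro y hy
  set ℓ := η • g - fderiv ℝ ψ x₀
  have hmin' : IsMinOn (fun z => ψ z + ℓ z) X yplus := by
    have hmono : Monotone fun u => η * u + (ψ x₀ - fderiv ℝ ψ x₀ x₀) :=
      (monotone_id.const_mul hη.le).add_const _
    convert hmin.comp_mono hmono using 1
    ext z
    simp only [Function.comp_apply, map_sub, ℓ, sub_apply, smul_apply, smul_eq_mul]
    field_simp
    ring
  have hstep := mul_norm_sub_le_of_isMinOn_add _ hX hsc ℓ hyp hy hmin'
  have hdual : ‖ℓ + fderiv ℝ ψ y‖ ≤ η * ‖g‖ + Gψ * ‖y - x₀‖ := calc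
    ‖ℓ + fderiv ℝ ψ y‖ = ‖η • g + (fderiv ℝ ψ y - fderiv ℝ ψ x₀)‖ := by
      congr 1; simp only [ℓ]; abel
    _ ≤ η * ‖g‖ + Gψ * ‖y - x₀‖ := by
      grw [norm_add_le, norm_smul, Real.norm_of_nonneg hη.le, hlip y hy x₀ hx₀]
  rw [le_div_iff₀ hσ, mul_comm]
  exact hstep.trans hdual

/-- Mirror-descent step stability: if `y⁺` minimizes `x ↦ g(x) + B_ψ(x;x₀)/η` over `X`,
where `ψ` is `σ`-strongly convex with `G_ψ`-Lipschitz gradients on `X`, then for every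
`y ∈ X`, `‖y − y⁺‖ ≤ (η‖g‖⋆ + G_ψ‖y − x₀‖)/σ`. -/
theorem mirror_step_stability
    {E : Type*} [NormedAddCommGroup E] [NormedSpace ℝ E]
    (X : Set E) (hX : Convex ℝ X)
    (ψ : E → ℝ) (hψ : Differentiable ℝ ψ)
    (σ : ℝ) (hσ : 0 < σ)
    (hsc : ∀ a ∈ X, ∀ b ∈ X,
      ψ a - ψ b - fderiv ℝ ψ b (a - b) ≥ σ / 2 * ‖a - b‖ ^ 2)
    (Gψ : ℝ)
    (hlip : ∀ a ∈ X, ∀ b ∈ X, ‖fderiv ℝ ψ a - fderiv ℝ ψ b‖ ≤ Gψ * ‖a - b‖)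
    (g : E →L[ℝ] ℝ) (η : ℝ) (hη : 0 < η) (x₀ : E) (hx₀ : x₀ ∈ X)
    (yplus : E) (hyp : yplus ∈ X)
    (hmin : IsMinOn
      (fun z => g z + (ψ z - ψ x₀ - fderiv ℝ ψ x₀ (z - x₀)) / η) X yplus) :
    ∀ y ∈ X, ‖y - yplus‖ ≤ (η * ‖g‖ + Gψ * ‖y - x₀‖) / σ :=
  mirror_step_stability_general X hX ψ σ hσ hsc Gψ hlip g η hη x₀ hx₀ yplus hyp hmin
end

section
/- (Theorem 2) Under the FTDL-RSC scheme, for every x* ∈ X the regret satisfies Reg_T := Σ_{t=1}^T f_t(x_t) − Σ_{t=1}^T f_t(x*) ≤ 3dG⋆²(1 + ln T)/(σγ), where d := max_{1≤t≤T} d_t. -/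
open Finset

/-!
Write `F̄ₜ` for the sum of the losses revealed by the end of round `t`, `nₜ` for their number
and `yₜ` for the minimiser of `F̄ₜ` over `X`. Each loss is `σγ`-strongly convex in norm, so
`F̄ₜ` grows quadratically with modulus `nₜσγ` around `yₜ`. Hence the approximate leader
`xₜ₊₁` is within `(G/σγ)·#Fₜ/(2nₜ)` of `yₜ`, and comparing the growth of `F̄ₜ` and `F̄ₜ₊₁`
around their minimisers gives `‖yₜ - yₜ₊₁‖ ≤ (G/σγ)·2(nₜ₊₁ - nₜ)/(nₜ + nₜ₊₁)`, which is at most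
`(G/σγ)(log nₜ₊₁ - log nₜ)`.

The regret splits into `∑ₖ (fₖ(xₖ) - fₖ(xₖ₊dₖ))` plus the regret of the iterates
`xₖ₊dₖ` computed just after `fₖ` is revealed. By the be-the-leader argument the second part is
at most the sum of the tolerances. The first part is at most `G` times the path length of the
iterates over the delay windows `[k, k + dₖ)`, and each step lies in at most `d` windows. Both
bounds come down to `∑ₜ #Fₜ/nₜ ≤ 1 + log T`.
-/

theorem two_mul_sub_div_add_le_log_sub_log {a b : ℝ} (ha : 0 < a) (hab : a ≤ b) :
    2 * (b - a) / (a + b) ≤ Real.log b - Real.log a := by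
  have hb : 0 < b := ha.trans_le hab
  set u := (b - a) / (a + b) with hu_def
  have hu : |u| < 1 := by
    rw [abs_lt, lt_div_iff₀ (by linarith), div_lt_iff₀ (by linarith)]
    constructor <;> linarith
  have hlog : Real.log (1 + u) - Real.log (1 - u) = Real.log b - Real.log a := by
    have h₁ : 1 + u = 2 * b / (a + b) := by rw [hu_def]; field_simp; ring
    have h₂ : 1 - u = 2 * a / (a + b) := by rw [hu_def]; field_simp; ring
    rw [h₁, h₂, Real.log_div (by positivity) (by positivity),
      Real.log_div (by positivity) (by positivity), Real.log_mul two_ne_zero hb.ne',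
      Real.log_mul two_ne_zero ha.ne']
    ring
  have hu0 : 0 ≤ u := div_nonneg (by linarith) (by linarith)
  have := le_hasSum (Real.hasSum_log_sub_log_of_abs_lt_one hu) 0 fun k _ => by positivity
  rw [hlog] at this
  simpa [mul_div_assoc] using this

theorem sub_div_le_log_sub_log {a b : ℝ} (ha : 0 < a) (hab : a ≤ b) :
    (b - a) / b ≤ Real.log b - Real.log a := by
  refine le_trans ?_ (two_mul_sub_div_add_le_log_sub_log ha hab)
  rw [div_le_div_iff₀ (by linarith) (by linarith)]
  nlinarith

theorem sum_div_partialSum_le_one_add_log (c : ℕ → ℕ) (h1 : 0 < c 1) {T : ℕ} (hT : 1 ≤ T) :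
    ∑ t ∈ Icc 1 T, (c t : ℝ) / (∑ τ ∈ Icc 1 t, c τ : ℕ) ≤
      1 + Real.log (∑ τ ∈ Icc 1 T, c τ : ℕ) := by
  induction T, hT using Nat.le_induction with
  | base =>
    have : (c 1 : ℝ) ≠ 0 := by positivity
    simp [this, Real.log_natCast_nonneg]
  | succ T hT ih =>
    have hpos : (0 : ℝ) < (∑ τ ∈ Icc 1 T, c τ : ℕ) := by
      exact_mod_cast h1.trans_le (single_le_sum (by simp) (by simp [hT]))
    have hlog := sub_div_le_log_sub_log hpos
      (b := (∑ τ ∈ Icc 1 T, c τ : ℕ) + c (T + 1)) (by simp)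
    rw [sum_Icc_succ_top (by omega), sum_Icc_succ_top (by omega), add_sub_cancel_left] at *
    push_cast at hlog ih ⊢
    linarith

theorem sum_sum_Ico_le_mul_sum {s u : Finset ℕ} {w : ℕ → ℕ} {D : ℕ} {a : ℕ → ℝ}
    (hw : ∀ k ∈ s, w k ≤ D) (hsub : ∀ k ∈ s, Ico k (k + w k) ⊆ u) (ha : ∀ r ∈ u, 0 ≤ a r) :
    ∑ k ∈ s, ∑ r ∈ Ico k (k + w k), a r ≤ D * ∑ r ∈ u, a r := by
  rw [sum_comm' (t' := u) (s' := fun r => {k ∈ s | r ∈ Ico k (k + w k)})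
    (fun k r => ⟨fun h => ⟨mem_filter.2 h, hsub k h.1 h.2⟩, fun h => (mem_filter.1 h.1)⟩), mul_sum]
  refine sum_le_sum fun r hr => ?_
  rw [sum_const, nsmul_eq_mul]
  refine mul_le_mul_of_nonneg_right ?_ (ha r hr)
  have : {k ∈ s | r ∈ Ico k (k + w k)} ⊆ Icc (r + 1 - D) r := fun k hk => by
    obtain ⟨hks, hkr⟩ := mem_filter.1 hk
    have := hw k hks
    simp only [mem_Ico, mem_Icc] at hkr ⊢
    omega
  exact_mod_cast (card_le_card this).trans (by simp only [Nat.card_Icc]; omega)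

theorem card_filter_add_sub_one_eq_le {s : Finset ℕ} {d : ℕ → ℕ} {D : ℕ}
    (hd : ∀ k ∈ s, 1 ≤ d k ∧ d k ≤ D) (t : ℕ) : #{k ∈ s | k + d k - 1 = t} ≤ D := by
  have : {k ∈ s | k + d k - 1 = t} ⊆ Icc (t + 1 - D) t := fun k hk => by
    obtain ⟨hks, hkt⟩ := mem_filter.1 hk
    have := hd k hks
    simp only [mem_Icc]
    omega
  exact (card_le_card this).trans (by simp only [Nat.card_Icc]; omega)

section

variable {E : Type*} [NormedAddCommGroup E]

theorem IsMinOn.half_mul_sq_norm_sub_le [NormedSpace ℝ E] {X : Set E} {φ : E → ℝ}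
    {φ' : E →L[ℝ] ℝ} {y z : E} {m : ℝ} (hmin : IsMinOn φ X y) (hX : Convex ℝ X) (hy : y ∈ X)
    (hz : z ∈ X) (hφ : HasFDerivAt φ φ' y) (hsc : m / 2 * ‖z - y‖ ^ 2 ≤ φ z - φ y - φ' (z - y)) :
    m / 2 * ‖z - y‖ ^ 2 ≤ φ z - φ y := by
  have : 0 ≤ φ' (z - y) := hmin.localize.hasFDerivWithinAt_nonneg hφ.hasFDerivWithinAt
    (sub_mem_posTangentConeAt_of_segment_subset (hX.segment_subset hy hz))
  linarith

theorem norm_sub_le_of_quadratic_growth {φ₁ φ₂ : E → ℝ} {y₁ y₂ : E} {m₁ m₂ L : ℝ}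
    (hm : 0 < m₁ + m₂) (hL : 0 ≤ L)
    (h₁ : m₁ / 2 * ‖y₂ - y₁‖ ^ 2 ≤ φ₁ y₂ - φ₁ y₁) (h₂ : m₂ / 2 * ‖y₁ - y₂‖ ^ 2 ≤ φ₂ y₁ - φ₂ y₂)
    (hdiff : (φ₂ y₁ - φ₁ y₁) - (φ₂ y₂ - φ₁ y₂) ≤ L * ‖y₁ - y₂‖) :
    ‖y₁ - y₂‖ ≤ 2 * L / (m₁ + m₂) := by
  rw [norm_sub_rev] at h₁
  rw [le_div_iff₀ hm]
  rcases (norm_nonneg (y₁ - y₂)).eq_or_lt with h0 | hpos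
  · rw [← h0]; linarith
  · nlinarith

theorem sub_le_sq_div_of_strongConvex [NormedSpace ℝ E] {f : E → ℝ} {a b : E} {G S : ℝ}
    (hS : 0 < S) (hG : ‖fderiv ℝ f a‖ ≤ G)
    (hsc : S / 2 * ‖b - a‖ ^ 2 ≤ f b - f a - fderiv ℝ f a (b - a)) :
    f a - f b ≤ G ^ 2 / (2 * S) := by
  have hlin : -(fderiv ℝ f a (b - a)) ≤ G * ‖b - a‖ :=
    (neg_le_abs _).trans <| (fderiv ℝ f a).le_of_opNorm_le hG _
  rw [le_div_iff₀ (by positivity)]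
  nlinarith [sq_nonneg (S * ‖b - a‖ - G)]

end

/-- The be-the-leader lemma, with approximate leaders. -/
theorem sum_le_sum_add_of_approx_leader {E : Type*} {X : Set E} {g : ℕ → E → ℝ} {x : ℕ → E}
    {ε : ℕ → ℝ} {T : ℕ} (hε : ∀ t ∈ Icc 1 T, 0 ≤ ε t)
    (hx : ∀ t ∈ Icc 1 T, g t = 0 ∨ x (t + 1) ∈ X ∧
      ∀ z ∈ X, ∑ τ ∈ Icc 1 t, g τ (x (t + 1)) ≤ ∑ τ ∈ Icc 1 t, g τ z + ε t)
    {z : E} (hz : z ∈ X) :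
    ∑ t ∈ Icc 1 T, g t (x (t + 1)) ≤ ∑ t ∈ Icc 1 T, g t z + ∑ t ∈ Icc 1 T, ε t := by
  induction T generalizing z with
  | zero => simp
  | succ T ih =>
    have hsub : Icc 1 T ⊆ Icc 1 (T + 1) := Icc_subset_Icc_right T.le_succ
    have ih := fun {z} (hz : z ∈ X) =>
      ih (fun t ht => hε t (hsub ht)) (fun t ht => hx t (hsub ht)) hz
    simp only [sum_Icc_succ_top (Nat.le_add_left 1 T)]
    rcases hx (T + 1) (by simp) with h0 | ⟨hmem, hlead⟩
    · simp only [h0, Pi.zero_apply, add_zero]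
      linarith [ih hz, hε (T + 1) (by simp)]
    · have := hlead z hz
      simp only [sum_Icc_succ_top (Nat.le_add_left 1 T)] at this
      linarith [ih hmem]

noncomputable section

def feedbackCount (F : ℕ → Finset ℕ) (t : ℕ) : ℕ := ∑ τ ∈ Icc 1 t, #(F τ)

/-- `#F_p / (2 n_p)` for the last round `p ≤ t` with feedback (so `n_p = n_t`): `G / S` times it
bounds the distance from `x (t + 1)` to the minimiser of `cumulativeLoss F f t`. -/
def lastBatchRatio (F : ℕ → Finset ℕ) : ℕ → ℝ
  | 0 => 0
  | t + 1 => if (F (t + 1)).Nonempty then #(F (t + 1)) / (2 * feedbackCount F (t + 1))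
      else lastBatchRatio F t

def cumulativeLoss {E : Type*} (F : ℕ → Finset ℕ) (f : ℕ → E → ℝ) (t : ℕ) (z : E) : ℝ :=
  ∑ τ ∈ Icc 1 t, ∑ k ∈ F τ, f k z

theorem feedbackCount_succ (F : ℕ → Finset ℕ) (t : ℕ) :
    feedbackCount F (t + 1) = feedbackCount F t + #(F (t + 1)) :=
  sum_Icc_succ_top (by omega) _

theorem feedbackCount_pos {F : ℕ → Finset ℕ} (h1 : (F 1).Nonempty) {t : ℕ} (ht : 1 ≤ t) :
    0 < feedbackCount F t :=
  h1.card_pos.trans_le (single_le_sum (f := fun τ => #(F τ)) (by simp) (by simp [ht]))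

theorem lastBatchRatio_of_nonempty {F : ℕ → Finset ℕ} {t : ℕ} (h : (F t).Nonempty) :
    lastBatchRatio F t = #(F t) / (2 * feedbackCount F t) := by
  cases t with
  | zero => simp [lastBatchRatio, feedbackCount]
  | succ t => simp [lastBatchRatio, h]

theorem lastBatchRatio_succ_of_eq_empty {F : ℕ → Finset ℕ} {t : ℕ} (h : F (t + 1) = ∅) :
    lastBatchRatio F (t + 1) = lastBatchRatio F t := by
  simp [lastBatchRatio, h]

theorem lastBatchRatio_nonneg (F : ℕ → Finset ℕ) (t : ℕ) : 0 ≤ lastBatchRatio F t := by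
  induction t with
  | zero => simp [lastBatchRatio]
  | succ t ih => unfold lastBatchRatio; split_ifs <;> positivity

theorem cumulativeLoss_succ {E : Type*} (F : ℕ → Finset ℕ) (f : ℕ → E → ℝ) (t : ℕ) (z : E) :
    cumulativeLoss F f (t + 1) z = cumulativeLoss F f t z + ∑ k ∈ F (t + 1), f k z :=
  sum_Icc_succ_top (by omega) _

theorem cumulativeLoss_succ_of_eq_empty {E : Type*} {F : ℕ → Finset ℕ} (f : ℕ → E → ℝ) {t : ℕ}
    (h : F (t + 1) = ∅) : cumulativeLoss F f (t + 1) = cumulativeLoss F f t :=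
  funext fun z => by simp [cumulativeLoss_succ, h]

/-- `x` is an FTDL-RSC run with delays `d` on losses that are `G`-Lipschitz and `S`-strongly
convex on `X`; in the theorem `S = σγ`. -/
structure IsFTDLRun {E : Type*} [NormedAddCommGroup E] [NormedSpace ℝ E] (X : Set E) (T : ℕ)
    (d : ℕ → ℕ) (F : ℕ → Finset ℕ) (f : ℕ → E → ℝ) (G S : ℝ) (x : ℕ → E) : Prop where
  convex : Convex ℝ X
  delay_pos : ∀ k ∈ Icc 1 T, 1 ≤ d k
  arrival_le : ∀ k ∈ Icc 1 T, k + d k - 1 ≤ T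
  feedback_eq : ∀ t, F t = {k ∈ Icc 1 T | k + d k - 1 = t}
  feedback_one : (F 1).Nonempty
  differentiableAt : ∀ k ∈ Icc 1 T, ∀ z ∈ X, DifferentiableAt ℝ (f k) z
  norm_fderiv_le : ∀ k ∈ Icc 1 T, ∀ z ∈ X, ‖fderiv ℝ (f k) z‖ ≤ G
  modulus_pos : 0 < S
  strongConvex : ∀ k ∈ Icc 1 T, ∀ a ∈ X, ∀ b ∈ X,
    S / 2 * ‖a - b‖ ^ 2 ≤ f k a - f k b - fderiv ℝ (f k) b (a - b)
  start_mem : x 1 ∈ X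
  update : ∀ t ∈ Icc 1 T, (F t).Nonempty → x (t + 1) ∈ X ∧ ∃ y ∈ X,
    IsMinOn (cumulativeLoss F f t) X y ∧ cumulativeLoss F f t (x (t + 1)) ≤
      cumulativeLoss F f t y + #(F t) ^ 2 * G ^ 2 / (8 * S * feedbackCount F t)
  update_of_empty : ∀ t ∈ Icc 1 T, F t = ∅ → x (t + 1) = x t

namespace IsFTDLRun

variable {E : Type*} [NormedAddCommGroup E] [NormedSpace ℝ E] {X : Set E} {T : ℕ} {d : ℕ → ℕ}
  {F : ℕ → Finset ℕ} {f : ℕ → E → ℝ} {G S : ℝ} {x : ℕ → E}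

theorem feedback_subset (run : IsFTDLRun X T d F f G S x) (t : ℕ) : F t ⊆ Icc 1 T := by
  rw [run.feedback_eq]
  exact filter_subset _ _

theorem one_le (run : IsFTDLRun X T d F f G S x) : 1 ≤ T := by
  obtain ⟨k, hk⟩ := run.feedback_one
  have := mem_Icc.1 (run.feedback_subset 1 hk)
  omega

theorem arrival_mem (run : IsFTDLRun X T d F f G S x) {k : ℕ} (hk : k ∈ Icc 1 T) :
    k + d k - 1 ∈ Icc 1 T := by
  have := run.delay_pos k hk
  have := run.arrival_le k hk
  simp only [mem_Icc] at hk ⊢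
  omega

theorem sum_feedback {M : Type*} [AddCommMonoid M] (run : IsFTDLRun X T d F f G S x)
    (φ : ℕ → ℕ → M) :
    ∑ t ∈ Icc 1 T, ∑ k ∈ F t, φ k t = ∑ k ∈ Icc 1 T, φ k (k + d k - 1) := by
  calc ∑ t ∈ Icc 1 T, ∑ k ∈ F t, φ k t
      = ∑ t ∈ Icc 1 T, ∑ k ∈ {k ∈ Icc 1 T | k + d k - 1 = t}, φ k (k + d k - 1) := by
        simp_rw [run.feedback_eq]
        exact sum_congr rfl fun t _ => sum_congr rfl fun k hk => by rw [(mem_filter.1 hk).2]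
    _ = _ := sum_fiberwise_of_maps_to (fun k hk => run.arrival_mem hk) _

theorem feedbackCount_self (run : IsFTDLRun X T d F f G S x) : feedbackCount F T = T := by
  simpa [feedbackCount] using run.sum_feedback fun _ _ => (1 : ℕ)

theorem card_feedback_le (run : IsFTDLRun X T d F f G S x) (t : ℕ) :
    #(F t) ≤ (Icc 1 T).sup d := by
  rw [run.feedback_eq]
  exact card_filter_add_sub_one_eq_le (fun k hk => ⟨run.delay_pos k hk, le_sup hk⟩) t

theorem nonneg (run : IsFTDLRun X T d F f G S x) : 0 ≤ G :=
  (norm_nonneg _).trans (run.norm_fderiv_le 1 (by simp [run.one_le]) _ run.start_mem)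

theorem sub_le_mul_norm (run : IsFTDLRun X T d F f G S x) {k : ℕ} (hk : k ∈ Icc 1 T) {a b : E}
    (ha : a ∈ X) (hb : b ∈ X) : f k a - f k b ≤ G * ‖a - b‖ :=
  (le_abs_self _).trans <| run.convex.norm_image_sub_le_of_norm_fderiv_le
    (run.differentiableAt k hk) (run.norm_fderiv_le k hk) hb ha

theorem half_mul_sq_norm_sub_le (run : IsFTDLRun X T d F f G S x) {t : ℕ} {y z : E}
    (hy : y ∈ X) (hmin : IsMinOn (cumulativeLoss F f t) X y) (hz : z ∈ X) :
    feedbackCount F t * S / 2 * ‖z - y‖ ^ 2 ≤ cumulativeLoss F f t z - cumulativeLoss F f t y := by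
  have hk : ∀ τ, ∀ k ∈ F τ, k ∈ Icc 1 T := fun τ k hk => run.feedback_subset τ hk
  refine hmin.half_mul_sq_norm_sub_le run.convex hy hz (φ' := ∑ τ ∈ Icc 1 t, ∑ k ∈ F τ,
    fderiv ℝ (f k) y) (HasFDerivAt.fun_sum fun τ _ => HasFDerivAt.fun_sum fun k hkτ =>
      (run.differentiableAt k (hk τ k hkτ) y hy).hasFDerivAt) ?_
  calc feedbackCount F t * S / 2 * ‖z - y‖ ^ 2
      = ∑ τ ∈ Icc 1 t, ∑ k ∈ F τ, S / 2 * ‖z - y‖ ^ 2 := by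
        rw [feedbackCount, Nat.cast_sum, sum_mul, sum_div, sum_mul]
        refine sum_congr rfl fun τ _ => ?_
        rw [sum_const, nsmul_eq_mul]
        ring
    _ ≤ ∑ τ ∈ Icc 1 t, ∑ k ∈ F τ, (f k z - f k y - fderiv ℝ (f k) y (z - y)) :=
        sum_le_sum fun τ _ => sum_le_sum fun k hkτ => run.strongConvex k (hk τ k hkτ) z hz y hy
    _ = _ := by simp [cumulativeLoss, sum_sub_distrib]

theorem iterate_mem (run : IsFTDLRun X T d F f G S x) {t : ℕ} (ht : t ∈ Icc 1 (T + 1)) :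
    x t ∈ X := by
  obtain ⟨ht1, htT⟩ := mem_Icc.1 ht
  induction t, ht1 using Nat.le_induction with
  | base => exact run.start_mem
  | succ t h1t ih =>
    have htT' : t ∈ Icc 1 T := mem_Icc.2 ⟨h1t, by omega⟩
    by_cases hne : (F t).Nonempty
    · exact (run.update t htT' hne).1
    · rw [run.update_of_empty t htT' (not_nonempty_iff_eq_empty.1 hne)]
      exact ih (mem_Icc.2 ⟨h1t, by omega⟩) (by omega)

theorem exists_isMinOn (run : IsFTDLRun X T d F f G S x) {t : ℕ} (ht : t ∈ Icc 1 T) :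
    ∃ y ∈ X, IsMinOn (cumulativeLoss F f t) X y := by
  obtain ⟨ht1, htT⟩ := mem_Icc.1 ht
  induction t, ht1 using Nat.le_induction with
  | base => exact (run.update 1 ht run.feedback_one).2.imp fun _ h => ⟨h.1, h.2.1⟩
  | succ t h1t ih =>
    by_cases hne : (F (t + 1)).Nonempty
    · exact (run.update _ ht hne).2.imp fun _ h => ⟨h.1, h.2.1⟩
    · rw [cumulativeLoss_succ_of_eq_empty f (not_nonempty_iff_eq_empty.1 hne)]
      exact ih (mem_Icc.2 ⟨h1t, by omega⟩) (by omega)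

theorem norm_sub_le_of_nonempty (run : IsFTDLRun X T d F f G S x) {t : ℕ} (ht : t ∈ Icc 1 T)
    (hne : (F t).Nonempty) {y : E} (hy : y ∈ X) (hmin : IsMinOn (cumulativeLoss F f t) X y) :
    ‖x (t + 1) - y‖ ≤ G / S * lastBatchRatio F t := by
  obtain ⟨hxX, y', hy', hy'min, happrox⟩ := run.update t ht hne
  have hn : (0 : ℝ) < feedbackCount F t := by
    exact_mod_cast feedbackCount_pos run.feedback_one (mem_Icc.1 ht).1
  have hS := run.modulus_pos
  rw [lastBatchRatio_of_nonempty hne]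
  have hε : (#(F t) : ℝ) ^ 2 * G ^ 2 / (8 * S * feedbackCount F t) =
      feedbackCount F t * S / 2 * (G / S * (#(F t) / (2 * feedbackCount F t))) ^ 2 := by
    field_simp
    ring
  refine le_of_pow_le_pow_left₀ two_ne_zero
    (mul_nonneg (div_nonneg run.nonneg hS.le) (by positivity)) ?_
  refine le_of_mul_le_mul_left ?_ (by positivity : (0 : ℝ) < feedbackCount F t * S / 2)
  linarith [hε, isMinOn_iff.1 hy'min y hy, run.half_mul_sq_norm_sub_le hy hmin hxX]

theorem norm_sub_le_of_isMinOn (run : IsFTDLRun X T d F f G S x) {t : ℕ} (ht : t ∈ Icc 1 T)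
    {y : E} (hy : y ∈ X) (hmin : IsMinOn (cumulativeLoss F f t) X y) :
    ‖x (t + 1) - y‖ ≤ G / S * lastBatchRatio F t := by
  obtain ⟨ht1, htT⟩ := mem_Icc.1 ht
  induction t, ht1 using Nat.le_induction with
  | base => exact run.norm_sub_le_of_nonempty ht run.feedback_one hy hmin
  | succ t h1t ih =>
    by_cases hne : (F (t + 1)).Nonempty
    · exact run.norm_sub_le_of_nonempty ht hne hy hmin
    · have hempty := not_nonempty_iff_eq_empty.1 hne
      rw [cumulativeLoss_succ_of_eq_empty f hempty] at hmin
      rw [run.update_of_empty _ ht hempty, lastBatchRatio_succ_of_eq_empty hempty]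
      exact ih (mem_Icc.2 ⟨h1t, by omega⟩) hmin (by omega)

theorem norm_sub_le_log_sub_log (run : IsFTDLRun X T d F f G S x) {s : ℕ} (hs : 1 ≤ s)
    {y₁ y₂ : E} (hy₁ : y₁ ∈ X) (h₁ : IsMinOn (cumulativeLoss F f s) X y₁) (hy₂ : y₂ ∈ X)
    (h₂ : IsMinOn (cumulativeLoss F f (s + 1)) X y₂) :
    ‖y₁ - y₂‖ ≤ G / S * (Real.log (feedbackCount F (s + 1)) - Real.log (feedbackCount F s)) := by
  have hS := run.modulus_pos
  have hn : (0 : ℝ) < feedbackCount F s := by exact_mod_cast feedbackCount_pos run.feedback_one hs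
  have hsucc : (feedbackCount F (s + 1) : ℝ) = feedbackCount F s + #(F (s + 1)) := by
    exact_mod_cast feedbackCount_succ F s
  have hdiff : (cumulativeLoss F f (s + 1) y₁ - cumulativeLoss F f s y₁) -
      (cumulativeLoss F f (s + 1) y₂ - cumulativeLoss F f s y₂) ≤ #(F (s + 1)) * G * ‖y₁ - y₂‖ := by
    simp only [cumulativeLoss_succ, add_sub_cancel_left, ← sum_sub_distrib]
    calc ∑ k ∈ F (s + 1), (f k y₁ - f k y₂) ≤ ∑ k ∈ F (s + 1), G * ‖y₁ - y₂‖ :=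
          sum_le_sum fun k hk => run.sub_le_mul_norm (run.feedback_subset _ hk) hy₁ hy₂
      _ = _ := by rw [sum_const, nsmul_eq_mul, mul_assoc]
  have hstab := norm_sub_le_of_quadratic_growth (by positivity)
    (mul_nonneg (Nat.cast_nonneg _) run.nonneg) (run.half_mul_sq_norm_sub_le hy₁ h₁ hy₂)
    (run.half_mul_sq_norm_sub_le hy₂ h₂ hy₁) hdiff
  refine hstab.trans (le_of_eq_of_le ?_ (mul_le_mul_of_nonneg_left
    (two_mul_sub_div_add_le_log_sub_log hn (by rw [hsucc]; simp))
    (div_nonneg run.nonneg hS.le)))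
  rw [hsucc]
  field_simp
  ring

/-- Stated so that it telescopes over `s`; in rounds without feedback both sides vanish. -/
theorem norm_sub_succ_le (run : IsFTDLRun X T d F f G S x) {s : ℕ} (hs : s ∈ Ico 1 T) :
    ‖x (s + 1) - x (s + 2)‖ ≤ G / S * (#(F (s + 1)) / feedbackCount F (s + 1) -
      (lastBatchRatio F (s + 1) - lastBatchRatio F s) +
      (Real.log (feedbackCount F (s + 1)) - Real.log (feedbackCount F s))) := by
  obtain ⟨hs1, hsT⟩ := mem_Ico.1 hs
  have hs' : s ∈ Icc 1 T := mem_Icc.2 ⟨hs1, hsT.le⟩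
  have hs1' : s + 1 ∈ Icc 1 T := mem_Icc.2 ⟨by omega, hsT⟩
  by_cases hne : (F (s + 1)).Nonempty
  · obtain ⟨y₁, hy₁, h₁⟩ := run.exists_isMinOn hs'
    obtain ⟨y₂, hy₂, h₂⟩ := run.exists_isMinOn hs1'
    have hδ : (#(F (s + 1)) : ℝ) / feedbackCount F (s + 1) = 2 * lastBatchRatio F (s + 1) := by
      rw [lastBatchRatio_of_nonempty hne]
      ring
    calc ‖x (s + 1) - x (s + 2)‖ ≤ ‖x (s + 1) - y₁‖ + ‖y₁ - y₂‖ + ‖x (s + 1 + 1) - y₂‖ := by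
          rw [norm_sub_rev (x (s + 1 + 1))]
          exact (norm_sub_le_norm_sub_add_norm_sub _ y₂ _).trans
            (add_le_add_left (norm_sub_le_norm_sub_add_norm_sub _ y₁ _) _)
      _ ≤ G / S * lastBatchRatio F s +
            G / S * (Real.log (feedbackCount F (s + 1)) - Real.log (feedbackCount F s)) +
            G / S * lastBatchRatio F (s + 1) :=
          add_le_add (add_le_add (run.norm_sub_le_of_isMinOn hs' hy₁ h₁)
            (run.norm_sub_le_log_sub_log hs1 hy₁ h₁ hy₂ h₂))
            (run.norm_sub_le_of_isMinOn hs1' hy₂ h₂)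
      _ = _ := by rw [hδ]; ring
  · have hempty := not_nonempty_iff_eq_empty.1 hne
    rw [run.update_of_empty _ hs1' hempty, lastBatchRatio_succ_of_eq_empty hempty,
      feedbackCount_succ, hempty]
    simp

theorem sum_norm_sub_succ_le (run : IsFTDLRun X T d F f G S x) :
    ∑ s ∈ Ico 1 T, ‖x (s + 1) - x (s + 2)‖ ≤
      G / S * (∑ t ∈ Icc 1 T, (#(F t) : ℝ) / feedbackCount F t + 1 / 2 + Real.log T) := by
  have hS := run.modulus_pos
  have hT := run.one_le
  have hratio_one : lastBatchRatio F 1 = 1 / 2 := by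
    have : (#(F 1) : ℝ) ≠ 0 := by exact_mod_cast run.feedback_one.card_pos.ne'
    rw [lastBatchRatio_of_nonempty run.feedback_one,
      show feedbackCount F 1 = #(F 1) by simp [feedbackCount]]
    field_simp
  have hshift : ∑ s ∈ Ico 1 T, (#(F (s + 1)) : ℝ) / feedbackCount F (s + 1) ≤
      ∑ t ∈ Icc 1 T, (#(F t) : ℝ) / feedbackCount F t := by
    rw [sum_Ico_add' (fun t => (#(F t) : ℝ) / feedbackCount F t)]
    refine sum_le_sum_of_subset_of_nonneg (fun t ht => ?_) fun _ _ _ => by positivity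
    simp only [mem_Ico, mem_Icc] at ht ⊢
    omega
  refine (sum_le_sum fun s hs => run.norm_sub_succ_le hs).trans ?_
  rw [← mul_sum, sum_add_distrib, sum_sub_distrib, sum_Ico_sub _ hT,
    sum_Ico_sub (fun t => Real.log (feedbackCount F t)) hT,
    run.feedbackCount_self]
  refine mul_le_mul_of_nonneg_left ?_ (div_nonneg run.nonneg hS.le)
  have := lastBatchRatio_nonneg F T
  have : 0 ≤ Real.log (feedbackCount F 1) := Real.log_natCast_nonneg _
  linarith

theorem delayed_iterate_mem (run : IsFTDLRun X T d F f G S x) {k : ℕ} (hk : k ∈ Icc 1 T) :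
    x (k + d k) ∈ X := by
  have := mem_Icc.1 (run.arrival_mem hk)
  have := run.delay_pos k hk
  exact run.iterate_mem (mem_Icc.2 ⟨by omega, by omega⟩)

theorem sum_sub_delayed_le (run : IsFTDLRun X T d F f G S x) :
    ∑ k ∈ Icc 1 T, (f k (x k) - f k (x (k + d k))) ≤ G ^ 2 / (2 * S) +
      ((Icc 1 T).sup d : ℕ) * G ^ 2 / S *
        (∑ t ∈ Icc 1 T, (#(F t) : ℝ) / feedbackCount F t + 1 / 2 + Real.log T) := by
  have hT := run.one_le
  have h1 : 1 ∈ Icc 1 T := by simp [hT]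
  have hsplit : ∑ k ∈ Icc 1 T, (f k (x k) - f k (x (k + d k))) = f 1 (x 1) - f 1 (x (1 + d 1)) +
      ∑ k ∈ Ico 2 (T + 1), (f k (x k) - f k (x (k + d k))) := by
    rw [← Ico_add_one_right_eq_Icc, sum_eq_sum_Ico_succ_bot (by omega)]
  rw [hsplit]
  -- `x 1` is arbitrary, so round `1` is paid for by strong convexity alone.
  have hfirst : f 1 (x 1) - f 1 (x (1 + d 1)) ≤ G ^ 2 / (2 * S) :=
    sub_le_sq_div_of_strongConvex run.modulus_pos (run.norm_fderiv_le 1 h1 _ run.start_mem)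
      (run.strongConvex 1 h1 _ (run.delayed_iterate_mem h1) _ run.start_mem)
  have hwindow : ∑ k ∈ Ico 2 (T + 1), ∑ r ∈ Ico k (k + d k), ‖x r - x (r + 1)‖ ≤
      ((Icc 1 T).sup d : ℕ) * ∑ s ∈ Ico 1 T, ‖x (s + 1) - x (s + 2)‖ := by
    rw [sum_Ico_add' (fun r => ‖x r - x (r + 1)‖) 1 T 1]
    refine sum_sum_Ico_le_mul_sum (fun k hk => le_sup ?_) (fun k hk r hr => ?_)
      fun _ _ => norm_nonneg _
    · simp only [mem_Ico, mem_Icc] at hk ⊢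
      omega
    · have hk' : k ∈ Icc 1 T := by simp only [mem_Ico, mem_Icc] at hk ⊢; omega
      have := run.arrival_le k hk'
      simp only [mem_Ico] at hk hr ⊢
      omega
  have hrest : ∑ k ∈ Ico 2 (T + 1), (f k (x k) - f k (x (k + d k))) ≤
      G * ∑ k ∈ Ico 2 (T + 1), ∑ r ∈ Ico k (k + d k), ‖x r - x (r + 1)‖ := by
    rw [mul_sum]
    refine sum_le_sum fun k hk => ?_
    have hk' : k ∈ Icc 1 T := by simp only [mem_Ico, mem_Icc] at hk ⊢; omega
    have hk1 : k ∈ Icc 1 (T + 1) := by simp only [mem_Icc] at hk' ⊢; omega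
    calc f k (x k) - f k (x (k + d k)) ≤ G * dist (x k) (x (k + d k)) := by
          rw [dist_eq_norm]
          exact run.sub_le_mul_norm hk' (run.iterate_mem hk1) (run.delayed_iterate_mem hk')
      _ ≤ G * ∑ r ∈ Ico k (k + d k), ‖x r - x (r + 1)‖ := by
          simp only [← dist_eq_norm]
          exact mul_le_mul_of_nonneg_left (dist_le_Ico_sum_dist x (by omega)) run.nonneg
  have hmove := run.sum_norm_sub_succ_le
  have hG := run.nonneg
  calc _ ≤ G ^ 2 / (2 * S) + G * (((Icc 1 T).sup d : ℕ) *
        ∑ s ∈ Ico 1 T, ‖x (s + 1) - x (s + 2)‖) :=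
        add_le_add hfirst (hrest.trans (mul_le_mul_of_nonneg_left hwindow hG))
    _ ≤ G ^ 2 / (2 * S) + G * (((Icc 1 T).sup d : ℕ) * (G / S *
        (∑ t ∈ Icc 1 T, (#(F t) : ℝ) / feedbackCount F t + 1 / 2 + Real.log T))) := by gcongr
    _ = _ := by ring

theorem sum_delayed_sub_le (run : IsFTDLRun X T d F f G S x) {z : E} (hz : z ∈ X) :
    ∑ k ∈ Icc 1 T, f k (x (k + d k)) - ∑ k ∈ Icc 1 T, f k z ≤
      ((Icc 1 T).sup d : ℕ) * G ^ 2 / (8 * S) *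
        ∑ t ∈ Icc 1 T, (#(F t) : ℝ) / feedbackCount F t := by
  have hS := run.modulus_pos
  have hleader := sum_le_sum_add_of_approx_leader (X := X) (T := T) (x := x)
    (g := fun t z => ∑ k ∈ F t, f k z)
    (ε := fun t => #(F t) ^ 2 * G ^ 2 / (8 * S * feedbackCount F t))
    (fun t _ => by positivity) (fun t ht => ?_) hz
  · rw [run.sum_feedback fun k t => f k (x (t + 1)), run.sum_feedback fun k _ => f k z] at hleader
    rw [sub_le_iff_le_add', mul_sum]
    refine le_trans (le_of_eq_of_le (sum_congr rfl fun k hk => ?_) hleader)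
      (add_le_add le_rfl (sum_le_sum fun t _ => ?_))
    · have := run.delay_pos k hk
      rw [Nat.sub_add_cancel (by omega)]
    · have hc : (#(F t) : ℝ) ≤ ((Icc 1 T).sup d : ℕ) := by exact_mod_cast run.card_feedback_le t
      calc (#(F t) : ℝ) ^ 2 * G ^ 2 / (8 * S * feedbackCount F t)
          = #(F t) * G ^ 2 / (8 * S) * (#(F t) / feedbackCount F t) := by ring
        _ ≤ _ := by gcongr
  · by_cases hne : (F t).Nonempty
    · obtain ⟨hmem, y, hy, hmin, happrox⟩ := run.update t ht hne
      exact Or.inr ⟨hmem, fun z hz => happrox.trans (by gcongr; exact hmin hz)⟩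
    · left
      funext z
      simp [not_nonempty_iff_eq_empty.1 hne]

theorem regret_le (run : IsFTDLRun X T d F f G S x) {z : E} (hz : z ∈ X) :
    ∑ t ∈ Icc 1 T, f t (x t) - ∑ t ∈ Icc 1 T, f t z ≤
      3 * ((Icc 1 T).sup d : ℕ) * G ^ 2 * (1 + Real.log T) / S := by
  set D : ℝ := (((Icc 1 T).sup d : ℕ) : ℝ)
  set W := ∑ t ∈ Icc 1 T, (#(F t) : ℝ) / feedbackCount F t
  have hW : W ≤ 1 + Real.log T := by
    have := sum_div_partialSum_le_one_add_log (fun τ => #(F τ)) run.feedback_one.card_pos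
      run.one_le
    rwa [← feedbackCount, run.feedbackCount_self] at this
  have hD : 1 ≤ D := by
    have h1 : 1 ∈ Icc 1 T := by simp [run.one_le]
    simpa [D] using (run.delay_pos 1 h1).trans (le_sup h1)
  have hlog : 0 ≤ Real.log T := Real.log_natCast_nonneg T
  have hW0 : 0 ≤ W := sum_nonneg fun _ _ => by positivity
  have hcoeff : 1 / 2 + D * (W + 1 / 2 + Real.log T) + D * W / 8 ≤ 3 * D * (1 + Real.log T) := by
    nlinarith [mul_le_mul_of_nonneg_left hW (by linarith : (0 : ℝ) ≤ D)]
  have hK : 0 ≤ G ^ 2 / S := div_nonneg (sq_nonneg G) run.modulus_pos.le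
  calc ∑ t ∈ Icc 1 T, f t (x t) - ∑ t ∈ Icc 1 T, f t z
      = ∑ k ∈ Icc 1 T, (f k (x k) - f k (x (k + d k))) +
          (∑ k ∈ Icc 1 T, f k (x (k + d k)) - ∑ k ∈ Icc 1 T, f k z) := by
        rw [sum_sub_distrib]
        ring
    _ ≤ G ^ 2 / (2 * S) + D * G ^ 2 / S * (W + 1 / 2 + Real.log T) + D * G ^ 2 / (8 * S) * W :=
        add_le_add run.sum_sub_delayed_le (run.sum_delayed_sub_le hz)
    _ = G ^ 2 / S * (1 / 2 + D * (W + 1 / 2 + Real.log T) + D * W / 8) := by ring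
    _ ≤ G ^ 2 / S * (3 * D * (1 + Real.log T)) := by gcongr
    _ = _ := by ring

end IsFTDLRun

end

theorem ftdl_rsc_regret_general
    {E : Type*} [NormedAddCommGroup E] [NormedSpace ℝ E]
    (X : Set E) (hX : Convex ℝ X)
    (T : ℕ) (d : ℕ → ℕ)
    (hd : ∀ t ∈ Finset.Icc 1 T, 1 ≤ d t ∧ t + d t - 1 ≤ T)
    (F : ℕ → Finset ℕ)
    (hF : ∀ t, F t = (Finset.Icc 1 T).filter (fun k => k + d k - 1 = t))
    (hF1 : (F 1).Nonempty)
    (f : ℕ → E → ℝ) (Gstar : ℝ)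
    (hfdiff : ∀ t ∈ Finset.Icc 1 T, Differentiable ℝ (f t))
    (hG : ∀ t ∈ Finset.Icc 1 T, ∀ z ∈ X, ‖fderiv ℝ (f t) z‖ ≤ Gstar)
    (ψ : E → ℝ) (σ γ : ℝ) (hσ : 0 < σ) (hγ : 0 < γ)
    (hψsc : ∀ a ∈ X, ∀ b ∈ X,
      ψ a - ψ b - fderiv ℝ ψ b (a - b) ≥ σ / 2 * ‖a - b‖ ^ 2)
    (hrel : ∀ t ∈ Finset.Icc 1 T, ∀ a ∈ X, ∀ b ∈ X,
      f t a - f t b - fderiv ℝ (f t) b (a - b)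
        ≥ γ * (ψ a - ψ b - fderiv ℝ ψ b (a - b)))
    (Fb : ℕ → E → ℝ)
    (hFb : ∀ t z, Fb t z = ∑ τ ∈ Finset.Icc 1 t, ∑ k ∈ F τ, f k z)
    (x : ℕ → E) (hx1 : x 1 ∈ X)
    (hupd : ∀ t ∈ Finset.Icc 1 T, (F t).Nonempty →
      x (t + 1) ∈ X ∧ ∃ ystar ∈ X, IsMinOn (Fb t) X ystar ∧
        Fb t (x (t + 1)) ≤ Fb t ystar
          + ((F t).card : ℝ) ^ 2 * Gstar ^ 2
            / (8 * σ * γ * ∑ τ ∈ Finset.Icc 1 t, ((F τ).card : ℝ)))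
    (hupd0 : ∀ t ∈ Finset.Icc 1 T, F t = ∅ → x (t + 1) = x t)
    :
    ∀ xstar ∈ X,
      ∑ t ∈ Finset.Icc 1 T, f t (x t) - ∑ t ∈ Finset.Icc 1 T, f t xstar
        ≤ 3 * (((Finset.Icc 1 T).sup d : ℕ) : ℝ) * Gstar ^ 2 * (1 + Real.log T)
            / (σ * γ) := by
  obtain rfl : Fb = cumulativeLoss F f := funext fun t => funext (hFb t)
  have htol : ∀ t, 8 * σ * γ * ∑ τ ∈ Icc 1 t, (#(F τ) : ℝ) = 8 * (σ * γ) * feedbackCount F t :=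
    fun t => by push_cast [feedbackCount]; ring
  have run : IsFTDLRun X T d F f Gstar (σ * γ) x :=
    { convex := hX
      delay_pos := fun k hk => (hd k hk).1
      arrival_le := fun k hk => (hd k hk).2
      feedback_eq := hF
      feedback_one := hF1
      differentiableAt := fun k hk z _ => hfdiff k hk z
      norm_fderiv_le := hG
      modulus_pos := mul_pos hσ hγ
      strongConvex := fun k hk a ha b hb => by
        nlinarith [hrel k hk a ha b hb, mul_le_mul_of_nonneg_left (hψsc a ha b hb) hγ.le]
      start_mem := hx1
      update := fun t ht hne => by simpa only [htol] using hupd t ht hne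
      update_of_empty := hupd0 }
  exact fun xstar hxstar => run.regret_le hxstar

/-- Theorem 2: FTDL-RSC regret bound. -/
theorem ftdl_rsc_regret
    {E : Type*} [NormedAddCommGroup E] [NormedSpace ℝ E]
    (X : Set E) (hXne : X.Nonempty) (hX : Convex ℝ X)
    (T : ℕ) (hT : 1 ≤ T) (d : ℕ → ℕ)
    (hd : ∀ t ∈ Finset.Icc 1 T, 1 ≤ d t ∧ t + d t - 1 ≤ T)
    (F : ℕ → Finset ℕ)
    (hF : ∀ t, F t = (Finset.Icc 1 T).filter (fun k => k + d k - 1 = t))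
    (hF1 : (F 1).Nonempty)
    (f : ℕ → E → ℝ) (Gstar : ℝ)
    (hfdiff : ∀ t ∈ Finset.Icc 1 T, Differentiable ℝ (f t))
    (hG : ∀ t ∈ Finset.Icc 1 T, ∀ z ∈ X, ‖fderiv ℝ (f t) z‖ ≤ Gstar)
    (ψ : E → ℝ) (σ γ : ℝ) (hσ : 0 < σ) (hγ : 0 < γ)
    (hψdiff : Differentiable ℝ ψ)
    (hψsc : ∀ a ∈ X, ∀ b ∈ X,
      ψ a - ψ b - fderiv ℝ ψ b (a - b) ≥ σ / 2 * ‖a - b‖ ^ 2)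
    (hrel : ∀ t ∈ Finset.Icc 1 T, ∀ a ∈ X, ∀ b ∈ X,
      f t a - f t b - fderiv ℝ (f t) b (a - b)
        ≥ γ * (ψ a - ψ b - fderiv ℝ ψ b (a - b)))
    (Fb : ℕ → E → ℝ)
    (hFb : ∀ t z, Fb t z = ∑ τ ∈ Finset.Icc 1 t, ∑ k ∈ F τ, f k z)
    (x : ℕ → E) (hx1 : x 1 ∈ X)
    (hupd : ∀ t ∈ Finset.Icc 1 T, (F t).Nonempty →
      x (t + 1) ∈ X ∧ ∃ ystar ∈ X, IsMinOn (Fb t) X ystar ∧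
        Fb t (x (t + 1)) ≤ Fb t ystar
          + ((F t).card : ℝ) ^ 2 * Gstar ^ 2
            / (8 * σ * γ * ∑ τ ∈ Finset.Icc 1 t, ((F τ).card : ℝ)))
    (hupd0 : ∀ t ∈ Finset.Icc 1 T, F t = ∅ → x (t + 1) = x t)
    :
    ∀ xstar ∈ X,
      ∑ t ∈ Finset.Icc 1 T, f t (x t) - ∑ t ∈ Finset.Icc 1 T, f t xstar
        ≤ 3 * (((Finset.Icc 1 T).sup d : ℕ) : ℝ) * Gstar ^ 2 * (1 + Real.log T)
            / (σ * γ) :=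
  ftdl_rsc_regret_general X hX T d hd F hF hF1 f Gstar hfdiff hG ψ σ γ hσ hγ hψsc hrel Fb hFb x hx1
    hupd hupd0
end

section
/- Under the DMD-GC scheme with approximation error ρ_{t,i_k} = η³/(2σ), for every x* ∈ X the normal term satisfies Σ_{t=1}^T Σ_{k∈F_t} [ f_k(x_{t,i_k}) − f_k(x*) ] ≤ ηT(G⋆² + 8ξRG⋆ + 2ηG⋆)/(2σ) + B_ψ(x*; x₁)/η. -/
/-!
Each inner step is a mirror-descent step with an inexact prox point `z'`. Convexity of `f`,
first-order optimality of the exact prox point `y` and the three-point identity of the Bregman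
divergence bound the step's regret by `(B(x*, z) - B(x*, y)) / η + η G² / (2σ)`. The prox
objective is `σ/η`-strongly convex, so `z'` lies within `η² / σ` of `y`, and the Lipschitz
gradient of `ψ` then gives `B(x*, z') ≤ B(x*, y) + 2ξGR η² / σ`. The inner steps of round `t`
visit `F t` in increasing order, so the Bregman terms telescope inside each round and then over
the rounds; each `k ≤ T` is received in exactly one round, so there are `T` steps in total.
-/

open Finset

section MirrorDescent

variable {E : Type*} [NormedAddCommGroup E] [NormedSpace ℝ E]

noncomputable def bregman (ψ : E → ℝ) (a b : E) : ℝ := ψ a - ψ b - fderiv ℝ ψ b (a - b)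

theorem bregman_three_point (ψ : E → ℝ) (a b c : E) :
    bregman ψ a c - bregman ψ a b - bregman ψ b c = (fderiv ℝ ψ b - fderiv ℝ ψ c) (a - b) := by
  simp only [bregman, map_sub, sub_apply]
  ring

theorem bregman_le_add_opNorm_mul {ψ : E → ℝ} {a b c : E} (hbc : 0 ≤ bregman ψ b c) :
    bregman ψ a b ≤ bregman ψ a c + ‖fderiv ℝ ψ b - fderiv ℝ ψ c‖ * ‖a - b‖ := by
  have h := bregman_three_point ψ a b c
  have hop := neg_abs_le ((fderiv ℝ ψ b - fderiv ℝ ψ c) (a - b))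
  have hle := (fderiv ℝ ψ b - fderiv ℝ ψ c).le_opNorm (a - b)
  rw [Real.norm_eq_abs] at hle
  linarith

theorem hasFDerivAt_bregman_left {ψ : E → ℝ} {a : E} (hψ : DifferentiableAt ℝ ψ a) (b : E) :
    HasFDerivAt (fun w => bregman ψ w b) (fderiv ℝ ψ a - fderiv ℝ ψ b) a := by
  simp only [bregman, map_sub]
  exact (hψ.hasFDerivAt.sub_const (ψ b)).sub
    ((fderiv ℝ ψ b).hasFDerivAt.sub_const (fderiv ℝ ψ b b))

theorem ConvexOn.add_apply_sub_le_of_hasFDerivAt {X : Set E} {f : E → ℝ} {f' : E →L[ℝ] ℝ}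
    {z w : E} (hf : ConvexOn ℝ X f) (hz : z ∈ X) (hw : w ∈ X) (hf' : HasFDerivAt f f' z) :
    f z + f' (w - z) ≤ f w := by
  have hline : ConvexOn ℝ (AffineMap.lineMap (k := ℝ) z w ⁻¹' X)
      (f ∘ AffineMap.lineMap (k := ℝ) z w) := hf.comp_affineMap _
  have hder : HasDerivAt (f ∘ AffineMap.lineMap (k := ℝ) z w) (f' (w - z)) 0 := by
    refine HasFDerivAt.comp_hasDerivAt (0 : ℝ) ?_ AffineMap.hasDerivAt_lineMap
    simpa using hf'
  have h := hline.le_slope_of_hasDerivAt (by simpa using hz) (by simpa using hw) one_pos hder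
  simp only [slope_def_field, Function.comp_apply, AffineMap.lineMap_apply_zero,
    AffineMap.lineMap_apply_one] at h
  linarith

noncomputable def mirrorObjective (ψ : E → ℝ) (η : ℝ) (g : E →L[ℝ] ℝ) (z w : E) : ℝ :=
  g w + bregman ψ w z / η

section MirrorStep

variable {X : Set E} {ψ : E → ℝ} {η : ℝ} {g : E →L[ℝ] ℝ} {z y : E}

-- First-order optimality of `y`, rewritten with the three-point identity.
theorem mirrorObjective_three_point (hX : Convex ℝ X) (hψ : DifferentiableAt ℝ ψ y) (hη : 0 < η)
    (hy : y ∈ X) (hmin : IsMinOn (mirrorObjective ψ η g z) X y) {w : E} (hw : w ∈ X) :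
    η * g (y - w) + bregman ψ y z + bregman ψ w y ≤ bregman ψ w z := by
  have hmin' : IsMinOn (fun w => η * g w + bregman ψ w z) X y := fun w hw => show _ ≤ _ by
    have h := mul_le_mul_of_nonneg_left (hmin hw) hη.le
    simpa only [mirrorObjective, mul_add, mul_div_cancel₀ _ hη.ne'] using h
  have hder : HasFDerivAt (fun w => η * g w + bregman ψ w z)
      (η • g + (fderiv ℝ ψ y - fderiv ℝ ψ z)) y :=
    (g.hasFDerivAt.const_mul η).add (hasFDerivAt_bregman_left hψ z)
  have hfermat := hmin'.localize.hasFDerivWithinAt_nonneg hder.hasFDerivWithinAt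
    (sub_mem_posTangentConeAt_of_segment_subset (hX.segment_subset hy hw))
  have h3 := bregman_three_point ψ w y z
  simp only [add_apply, smul_apply, smul_eq_mul, map_sub] at hfermat h3 ⊢
  linarith

theorem sq_norm_sub_le_of_le_mirrorObjective {σ ρ : ℝ} {z' : E} (hX : Convex ℝ X)
    (hψ : DifferentiableAt ℝ ψ y) (hsc : ∀ a ∈ X, ∀ b ∈ X, σ / 2 * ‖a - b‖ ^ 2 ≤ bregman ψ a b)
    (hη : 0 < η) (hy : y ∈ X) (hz' : z' ∈ X) (hmin : IsMinOn (mirrorObjective ψ η g z) X y)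
    (happ : mirrorObjective ψ η g z z' ≤ mirrorObjective ψ η g z y + ρ) :
    σ / 2 * ‖z' - y‖ ^ 2 ≤ η * ρ := by
  have h3 := mirrorObjective_three_point hX hψ hη hy hmin hz'
  have happ' := mul_le_mul_of_nonneg_left happ hη.le
  simp only [mirrorObjective, mul_add, mul_div_cancel₀ _ hη.ne', map_sub] at happ' h3
  linarith [hsc z' hz' y hy]

-- The argument gives the sharper constant `η * (G ^ 2 + 4 * ξ * R * G) / (2 * σ)`.
theorem mirror_step_regret {σ ξ R G : ℝ} {f : E → ℝ} {z' x : E} (hX : Convex ℝ X)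
    (hR : ∀ w ∈ X, ‖w‖ ≤ R) (hψ : DifferentiableAt ℝ ψ y)
    (hsc : ∀ a ∈ X, ∀ b ∈ X, σ / 2 * ‖a - b‖ ^ 2 ≤ bregman ψ a b)
    (hlip : ∀ a ∈ X, ∀ b ∈ X, ‖fderiv ℝ ψ a - fderiv ℝ ψ b‖ ≤ ξ * G * ‖a - b‖)
    (hσ : 0 < σ) (hξ : 0 ≤ ξ) (hη : 0 < η) (hf : ConvexOn ℝ X f) (hg : HasFDerivAt f g z)
    (hG : ‖g‖ ≤ G) (hz : z ∈ X) (hz' : z' ∈ X) (hx : x ∈ X) (hy : y ∈ X)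
    (hmin : IsMinOn (mirrorObjective ψ η g z) X y)
    (happ : mirrorObjective ψ η g z z' ≤ mirrorObjective ψ η g z y + η ^ 3 / (2 * σ)) :
    f z - f x ≤ (bregman ψ x z - bregman ψ x z') / η
      + η * (G ^ 2 + 8 * ξ * R * G + 2 * η * G) / (2 * σ) := by
  have hG0 : 0 ≤ G := (norm_nonneg g).trans hG
  have hR0 : 0 ≤ R := (norm_nonneg z).trans (hR z hz)
  have hconv := hf.add_apply_sub_le_of_hasFDerivAt hz hx hg
  have hopt := mirrorObjective_three_point hX hψ hη hy hmin hx
  have hgzy : g (z - y) ≤ G * ‖z - y‖ :=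
    (le_abs_self _).trans ((g.le_opNorm _).trans (by gcongr))
  have hyz : σ / 2 * ‖z - y‖ ^ 2 ≤ bregman ψ y z := norm_sub_rev z y ▸ hsc y hy z hz
  have hclose : σ * ‖z' - y‖ ≤ η ^ 2 := by
    have h := sq_norm_sub_le_of_le_mirrorObjective hX hψ hsc hη hy hz' hmin happ
    refine (pow_le_pow_iff_left₀ (by positivity) (by positivity) two_ne_zero).1 ?_
    field_simp at h
    nlinarith
  have hdrift : bregman ψ x z' ≤ bregman ψ x y + ξ * G * ‖z' - y‖ * (2 * R) := by
    have hz'y : 0 ≤ bregman ψ z' y := (by positivity : (0:ℝ) ≤ _).trans (hsc z' hz' y hy)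
    refine (bregman_le_add_opNorm_mul hz'y).trans ?_
    gcongr
    · exact hlip z' hz' y hy
    · exact (norm_sub_le _ _).trans (by linarith [hR x hx, hR z' hz'])
  have hamgm : η * G * ‖z - y‖ - σ / 2 * ‖z - y‖ ^ 2 ≤ η ^ 2 * G ^ 2 / (2 * σ) := by
    rw [le_div_iff₀ (by positivity)]
    nlinarith [sq_nonneg (σ * ‖z - y‖ - η * G)]
  have hstep : η * (f z - f x) ≤ bregman ψ x z - bregman ψ x z'
      + η ^ 2 * G ^ 2 / (2 * σ) + ξ * G * R * (2 * ‖z' - y‖) := by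
    have h1 := mul_le_mul_of_nonneg_left hconv hη.le
    have h2 := mul_le_mul_of_nonneg_left hgzy hη.le
    simp only [map_sub] at h1 h2 hopt
    linarith
  have hslack : ξ * G * R * (2 * σ * ‖z' - y‖) ≤ ξ * G * R * (2 * η ^ 2) :=
    mul_le_mul_of_nonneg_left (by linarith) (by positivity)
  have hcancel : 2 * σ * (η ^ 2 * G ^ 2 / (2 * σ)) = η ^ 2 * G ^ 2 := by field_simp
  rw [div_add_div _ _ hη.ne' (by positivity), le_div_iff₀ (by positivity)]
  linarith [mul_le_mul_of_nonneg_left hstep (by positivity : (0:ℝ) ≤ 2 * σ),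
    (by positivity : 0 ≤ ξ * G * R * η ^ 2), (by positivity : 0 ≤ η ^ 3 * G)]

end MirrorStep

end MirrorDescent

theorem sum_comp_card_filter_lt {α M : Type*} [LinearOrder α] [AddCommMonoid M]
    (s : Finset α) (h : ℕ → M) :
    ∑ k ∈ s, h #{a ∈ s | a < k} = ∑ i ∈ range #s, h i := by
  have hmono : StrictMonoOn (fun k => #{a ∈ s | a < k}) s := fun k _ k' hk' hlt =>
    card_lt_card <| (ssubset_iff_of_subset (monotone_filter_right s fun _ _ ha => ha.trans hlt)).2
      ⟨k, mem_filter.2 ⟨‹k ∈ s›, hlt⟩, fun hk => lt_irrefl k (mem_filter.1 hk).2⟩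
  have himage : s.image (fun k => #{a ∈ s | a < k}) = range #s := by
    refine eq_of_subset_of_card_le (fun i hi => ?_) ?_
    · obtain ⟨k, hk, rfl⟩ := mem_image.1 hi
      exact mem_range.2 (card_lt_card (filter_ssubset.2 ⟨k, hk, lt_irrefl k⟩))
    · rw [card_range, card_image_of_injOn hmono.injOn]
  rw [← himage, sum_image hmono.injOn]

theorem sum_sum_card_filter_lt_sub {α G : Type*} [AddCommGroup G] {T : ℕ} (hT : 1 ≤ T)
    (F : ℕ → Finset ℕ) (x : ℕ → α) (xx : ℕ → ℕ → α) (h : α → G)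
    (hxx0 : ∀ t ∈ Icc 1 T, xx t 0 = x t) (hxnext : ∀ t ∈ Icc 1 T, x (t + 1) = xx t #(F t)) :
    ∑ t ∈ Icc 1 T, ∑ k ∈ F t,
        (h (xx t #{s ∈ F t | s < k}) - h (xx t (#{s ∈ F t | s < k} + 1)))
      = h (x 1) - h (x (T + 1)) := by
  have hround : ∀ t ∈ Icc 1 T, ∑ k ∈ F t,
      (h (xx t #{s ∈ F t | s < k}) - h (xx t (#{s ∈ F t | s < k} + 1)))
        = h (x t) - h (x (t + 1)) := fun t ht => by
    rw [← hxx0 t ht, hxnext t ht]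
    exact (sum_comp_card_filter_lt (F t) fun i => h (xx t i) - h (xx t (i + 1))).trans
      (sum_range_sub' _ _)
  have htel := sum_Icc_sub hT fun t => h (x t)
  rw [sum_congr rfl hround, sum_sub_distrib]
  rw [sum_sub_distrib] at htel
  rw [← neg_sub, htel, neg_sub]

theorem sum_sum_le_sub_add_card_mul {α : Type*} {T : ℕ} (hT : 1 ≤ T) (F : ℕ → Finset ℕ)
    (x : ℕ → α) (xx : ℕ → ℕ → α) (h : α → ℝ) {c : ℝ} {u : ℕ → ℕ → ℝ}
    (hcard : ∑ t ∈ Icc 1 T, #(F t) = T)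
    (hxx0 : ∀ t ∈ Icc 1 T, xx t 0 = x t) (hxnext : ∀ t ∈ Icc 1 T, x (t + 1) = xx t #(F t))
    (hu : ∀ t ∈ Icc 1 T, ∀ k ∈ F t,
      u t k ≤ h (xx t #{s ∈ F t | s < k}) - h (xx t (#{s ∈ F t | s < k} + 1)) + c) :
    ∑ t ∈ Icc 1 T, ∑ k ∈ F t, u t k ≤ h (x 1) - h (x (T + 1)) + T * c := by
  refine (sum_le_sum fun t ht => sum_le_sum (hu t ht)).trans_eq ?_
  simp_rw [sum_add_distrib, sum_const, nsmul_eq_mul, ← sum_mul]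
  rw [sum_sum_card_filter_lt_sub hT F x xx h hxx0 hxnext, ← Nat.cast_sum, hcard]

theorem dmd_gc_normal_term_general
    {E : Type*} [NormedAddCommGroup E] [NormedSpace ℝ E]
    (X : Set E) (hX : Convex ℝ X)
    (R : ℝ) (hR : ∀ z ∈ X, ‖z‖ ≤ R)
    (T : ℕ) (hT : 1 ≤ T) (d : ℕ → ℕ)
    (hd : ∀ t ∈ Finset.Icc 1 T, 1 ≤ d t ∧ t + d t - 1 ≤ T)
    (F : ℕ → Finset ℕ)
    (hF : ∀ t, F t = (Finset.Icc 1 T).filter (fun k => k + d k - 1 = t))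
    (f : ℕ → E → ℝ) (Gstar : ℝ)
    (hfdiff : ∀ t ∈ Finset.Icc 1 T, Differentiable ℝ (f t))
    (hfconv : ∀ t ∈ Finset.Icc 1 T, ConvexOn ℝ X (f t))
    (hG : ∀ t ∈ Finset.Icc 1 T, ∀ z ∈ X, ‖fderiv ℝ (f t) z‖ ≤ Gstar)
    (ψ : E → ℝ) (σ ξ : ℝ) (hσ : 0 < σ) (hξ : 0 < ξ)
    (hψdiff : Differentiable ℝ ψ)
    (B : E → E → ℝ)
    (hB : ∀ a b, B a b = ψ a - ψ b - fderiv ℝ ψ b (a - b))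
    (hψsc : ∀ a ∈ X, ∀ b ∈ X, B a b ≥ σ / 2 * ‖a - b‖ ^ 2)
    (hψlip : ∀ a ∈ X, ∀ b ∈ X,
      ‖fderiv ℝ ψ a - fderiv ℝ ψ b‖ ≤ ξ * Gstar * ‖a - b‖)
    (η : ℝ) (hη : 0 < η)
    (x : ℕ → E) (xx : ℕ → ℕ → E)
    (hxxmem : ∀ t ∈ Finset.Icc 1 T, ∀ i ≤ (F t).card, xx t i ∈ X)
    (hxx0 : ∀ t ∈ Finset.Icc 1 T, xx t 0 = x t)
    (hxnext : ∀ t ∈ Finset.Icc 1 T, x (t + 1) = xx t (F t).card)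
    (A : ℕ → ℕ → E → ℝ)
    (hA : ∀ t k z, A t k z =
      fderiv ℝ (f k) (xx t ((F t).filter (fun s => s < k)).card) z
        + B z (xx t ((F t).filter (fun s => s < k)).card) / η)
    (hopt : ∀ t ∈ Finset.Icc 1 T, ∀ k ∈ F t, ∃ ystar ∈ X,
      IsMinOn (A t k) X ystar ∧
        A t k (xx t (((F t).filter (fun s => s < k)).card + 1))
          ≤ A t k ystar + η ^ 3 / (2 * σ))
    :
    ∀ xstar ∈ X,
      ∑ t ∈ Finset.Icc 1 T, ∑ k ∈ F t,
          (f k (xx t ((F t).filter (fun s => s < k)).card) - f k xstar)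
        ≤ η * (T : ℝ) * (Gstar ^ 2 + 8 * ξ * R * Gstar + 2 * η * Gstar) / (2 * σ)
            + B xstar (x 1) / η := by
  intro xstar hxstar
  obtain rfl : B = bregman ψ := funext fun a => funext (hB a)
  set C := η * (Gstar ^ 2 + 8 * ξ * R * Gstar + 2 * η * Gstar) / (2 * σ)
  have hstep : ∀ t ∈ Icc 1 T, ∀ k ∈ F t, f k (xx t #{s ∈ F t | s < k}) - f k xstar ≤
      bregman ψ xstar (xx t #{s ∈ F t | s < k}) / η
        - bregman ψ xstar (xx t (#{s ∈ F t | s < k} + 1)) / η + C := by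
    intro t ht k hk
    have hkT : k ∈ Icc 1 T := (mem_filter.1 (hF t ▸ hk)).1
    have hrank : #{s ∈ F t | s < k} < #(F t) :=
      card_lt_card (filter_ssubset.2 ⟨k, hk, lt_irrefl k⟩)
    obtain ⟨y, hy, hmin, happ⟩ := hopt t ht k hk
    rw [show A t k = mirrorObjective ψ η _ _ from funext (hA t k)] at hmin happ
    rw [← sub_div]
    exact mirror_step_regret hX hR (hψdiff y) hψsc hψlip hσ hξ.le hη (hfconv k hkT)
      (hfdiff k hkT _).hasFDerivAt (hG k hkT _ (hxxmem t ht _ hrank.le))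
      (hxxmem t ht _ hrank.le) (hxxmem t ht _ hrank) hxstar hy hmin happ
  have hcard : ∑ t ∈ Icc 1 T, #(F t) = T := by
    simp_rw [hF]
    rw [← card_eq_sum_card_fiberwise fun k hk => ?_, Nat.card_Icc, Nat.add_sub_cancel]
    have := hd k hk
    simp only [coe_Icc, Set.mem_Icc] at hk ⊢
    omega
  have hlast : 0 ≤ bregman ψ xstar (x (T + 1)) := by
    have hTT : T ∈ Icc 1 T := mem_Icc.2 ⟨hT, le_rfl⟩
    rw [hxnext T hTT]
    exact (by positivity : (0:ℝ) ≤ _).trans (hψsc _ hxstar _ (hxxmem T hTT _ le_rfl))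
  have hsum := sum_sum_le_sub_add_card_mul hT F x xx (fun p => bregman ψ xstar p / η) hcard
    hxx0 hxnext hstep
  have hTC : T * C = η * T * (Gstar ^ 2 + 8 * ξ * R * Gstar + 2 * η * Gstar) / (2 * σ) := by
    simp only [C]; ring
  linarith [div_nonneg hlast hη.le]

/-- DMD-GC normal term bound (Lemma 6). -/
theorem dmd_gc_normal_term
    {E : Type*} [NormedAddCommGroup E] [NormedSpace ℝ E]
    (X : Set E) (hXne : X.Nonempty) (hX : Convex ℝ X)
    (R : ℝ) (hR : ∀ z ∈ X, ‖z‖ ≤ R)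
    (T : ℕ) (hT : 1 ≤ T) (d : ℕ → ℕ)
    (hd : ∀ t ∈ Finset.Icc 1 T, 1 ≤ d t ∧ t + d t - 1 ≤ T)
    (F : ℕ → Finset ℕ)
    (hF : ∀ t, F t = (Finset.Icc 1 T).filter (fun k => k + d k - 1 = t))
    (f : ℕ → E → ℝ) (Gstar : ℝ)
    (hfdiff : ∀ t ∈ Finset.Icc 1 T, Differentiable ℝ (f t))
    (hfconv : ∀ t ∈ Finset.Icc 1 T, ConvexOn ℝ X (f t))
    (hG : ∀ t ∈ Finset.Icc 1 T, ∀ z ∈ X, ‖fderiv ℝ (f t) z‖ ≤ Gstar)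
    (ψ : E → ℝ) (σ ξ : ℝ) (hσ : 0 < σ) (hξ : 0 < ξ)
    (hψdiff : Differentiable ℝ ψ)
    (B : E → E → ℝ)
    (hB : ∀ a b, B a b = ψ a - ψ b - fderiv ℝ ψ b (a - b))
    (hψsc : ∀ a ∈ X, ∀ b ∈ X, B a b ≥ σ / 2 * ‖a - b‖ ^ 2)
    (hψlip : ∀ a ∈ X, ∀ b ∈ X,
      ‖fderiv ℝ ψ a - fderiv ℝ ψ b‖ ≤ ξ * Gstar * ‖a - b‖)
    (η : ℝ) (hη : 0 < η)
    (x : ℕ → E) (xx : ℕ → ℕ → E) (hx1 : x 1 ∈ X)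
    (hxxmem : ∀ t ∈ Finset.Icc 1 T, ∀ i ≤ (F t).card, xx t i ∈ X)
    (hxx0 : ∀ t ∈ Finset.Icc 1 T, xx t 0 = x t)
    (hxnext : ∀ t ∈ Finset.Icc 1 T, x (t + 1) = xx t (F t).card)
    (A : ℕ → ℕ → E → ℝ)
    (hA : ∀ t k z, A t k z =
      fderiv ℝ (f k) (xx t ((F t).filter (fun s => s < k)).card) z
        + B z (xx t ((F t).filter (fun s => s < k)).card) / η)
    (hopt : ∀ t ∈ Finset.Icc 1 T, ∀ k ∈ F t, ∃ ystar ∈ X,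
      IsMinOn (A t k) X ystar ∧
        A t k (xx t (((F t).filter (fun s => s < k)).card + 1))
          ≤ A t k ystar + η ^ 3 / (2 * σ))
    :
    ∀ xstar ∈ X,
      ∑ t ∈ Finset.Icc 1 T, ∑ k ∈ F t,
          (f k (xx t ((F t).filter (fun s => s < k)).card) - f k xstar)
        ≤ η * (T : ℝ) * (Gstar ^ 2 + 8 * ξ * R * Gstar + 2 * η * Gstar) / (2 * σ)
            + B xstar (x 1) / η :=
  dmd_gc_normal_term_general X hX R hR T hT d hd F hF f Gstar hfdiff hfconv hG ψ σ ξ hσ hξ hψdiff B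
    hB hψsc hψlip η hη x xx hxxmem hxx0 hxnext A hA hopt
end
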